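/- In base N ≥ 2, the limiting minimal and maximal frequencies of leading digit n (1 ≤ n ≤ N−1) among {1,...,m} as m → ∞ are f_min = 1/((N−1)n) and f_max = N/((N−1)(n+1)); that is, the frequency along m = n·N^k − 1 tends to 1/((N−1)n) and along m = (n+1)·N^k − 1 tends to N/((N−1)(n+1)). -/

import Mathlib

/-!
The integers in `[1, M)` with leading digit `n` are exactly the blocks `[n N^j, (n+1) N^j)`
that fit below `M`. Cutting at `M = n N^k` catches the blocks `j < k`, cutting at
`M = (n+1) N^k` also the full block `j = k`, so the counts are the geometric sums
`(N^k - 1)/(N - 1)` and `(N^(k+1) - 1)/(N - 1)`; dividing by `M - 1` and letting `k → ∞` gives the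
two limits.
-/

open Finset Filter Topology

def leadingDigit (b x : ℕ) : ℕ := x / b ^ Nat.log b x

section Counting

variable {N n : ℕ}

lemma log_eq_of_mem_Ico_mul_pow (hn : 0 < n) (hnN : n < N) {x j : ℕ}
    (hx : x ∈ Ico (n * N ^ j) ((n + 1) * N ^ j)) : Nat.log N x = j := by
  rw [mem_Ico] at hx
  apply Nat.log_eq_of_pow_le_of_lt_pow
  · exact (Nat.le_mul_of_pos_left _ hn).trans hx.1
  · calc x < (n + 1) * N ^ j := hx.2
      _ ≤ N * N ^ j := Nat.mul_le_mul_right _ hnN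
      _ = N ^ (j + 1) := (pow_succ' N j).symm

lemma leadingDigit_eq_iff (hn : 0 < n) (hnN : n < N) {x : ℕ} :
    leadingDigit N x = n ↔ ∃ j, x ∈ Ico (n * N ^ j) ((n + 1) * N ^ j) := by
  constructor
  · rintro rfl
    have hpos : 0 < N ^ Nat.log N x := pow_pos (by omega) _
    exact ⟨Nat.log N x, mem_Ico.2 ⟨Nat.div_mul_le_self _ _, by
      rw [add_one_mul]; exact Nat.lt_div_mul_add hpos⟩⟩
  · rintro ⟨j, hx⟩
    rw [leadingDigit, log_eq_of_mem_Ico_mul_pow hn hnN hx]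
    exact Nat.div_eq_of_lt_le (mem_Ico.1 hx).1 (mem_Ico.1 hx).2

lemma succ_mul_pow_le_mul_pow_succ (hn : 0 < n) (hnN : n < N) (j : ℕ) :
    (n + 1) * N ^ j ≤ n * N ^ (j + 1) := by
  rw [pow_succ', ← mul_assoc]
  exact Nat.mul_le_mul_right _ (by nlinarith)

lemma filter_leadingDigit_eq_Ico (hn : 0 < n) (hnN : n < N) {M K : ℕ}
    (hlow : ∀ j < K, (n + 1) * N ^ j ≤ M) (hhigh : M ≤ n * N ^ K) :
    {x ∈ Ico 1 M | leadingDigit N x = n} =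
      (range K).biUnion fun j => Ico (n * N ^ j) ((n + 1) * N ^ j) := by
  ext x
  simp only [mem_filter, mem_biUnion, mem_range, leadingDigit_eq_iff hn hnN, mem_Ico]
  constructor
  · rintro ⟨⟨-, hxM⟩, j, hj⟩
    refine ⟨j, ?_, hj⟩
    by_contra! hKj
    have : n * N ^ K ≤ n * N ^ j := Nat.mul_le_mul_left n (Nat.pow_le_pow_right (by omega) hKj)
    omega
  · rintro ⟨j, hjK, hj⟩
    have := hlow j hjK
    have : 0 < n * N ^ j := Nat.mul_pos hn (pow_pos (by omega) _)
    exact ⟨⟨by omega, by omega⟩, j, hj⟩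

lemma card_filter_leadingDigit_eq_Ico (hn : 0 < n) (hnN : n < N) {M K : ℕ}
    (hlow : ∀ j < K, (n + 1) * N ^ j ≤ M) (hhigh : M ≤ n * N ^ K) :
    #{x ∈ Ico 1 M | leadingDigit N x = n} = ∑ j ∈ range K, N ^ j := by
  rw [filter_leadingDigit_eq_Ico hn hnN hlow hhigh, card_biUnion]
  · refine sum_congr rfl fun j _ => ?_
    rw [Nat.card_Ico, add_one_mul, Nat.add_sub_cancel_left]
  · intro i _ j _ hij
    exact disjoint_left.2 fun x hi hj =>
      hij ((log_eq_of_mem_Ico_mul_pow hn hnN hi).symm.trans (log_eq_of_mem_Ico_mul_pow hn hnN hj))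

lemma card_filter_leadingDigit_eq_Icc_mul_pow (hn : 0 < n) (hnN : n < N) (k : ℕ) :
    #{x ∈ Icc 1 (n * N ^ k - 1) | leadingDigit N x = n} = ∑ j ∈ range k, N ^ j := by
  rw [Icc_sub_one_right_eq_Ico_of_not_isMin]
  · refine card_filter_leadingDigit_eq_Ico hn hnN (fun j hj => ?_) le_rfl
    exact (succ_mul_pow_le_mul_pow_succ hn hnN j).trans
      (Nat.mul_le_mul_left n (Nat.pow_le_pow_right (by omega) hj))
  · simp only [isMin_iff_eq_bot, Nat.bot_eq_zero]
    exact (Nat.mul_pos hn (pow_pos (by omega) k)).ne'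

lemma card_filter_leadingDigit_eq_Icc_succ_mul_pow (hn : 0 < n) (hnN : n < N) (k : ℕ) :
    #{x ∈ Icc 1 ((n + 1) * N ^ k - 1) | leadingDigit N x = n} = ∑ j ∈ range (k + 1), N ^ j := by
  rw [Icc_sub_one_right_eq_Ico_of_not_isMin]
  · refine card_filter_leadingDigit_eq_Ico hn hnN (fun j hj => ?_)
      (succ_mul_pow_le_mul_pow_succ hn hnN k)
    exact Nat.mul_le_mul_left _ (Nat.pow_le_pow_right (by omega) (Nat.lt_succ_iff.1 hj))
  · simp only [isMin_iff_eq_bot, Nat.bot_eq_zero]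
    exact (Nat.mul_pos n.succ_pos (pow_pos (by omega) k)).ne'

end Counting

lemma tendsto_geom_sum_div_mul_pow_sub_one {a c : ℝ} (ha : 1 < a) (hc : c ≠ 0) (d : ℕ) :
    Tendsto (fun k : ℕ => (∑ j ∈ range (k + d), a ^ j) / (c * a ^ k - 1)) atTop
      (𝓝 (a ^ d / ((a - 1) * c))) := by
  have hinv : Tendsto (fun k : ℕ => (a ^ k)⁻¹) atTop (𝓝 0) :=
    tendsto_inv_atTop_zero.comp (tendsto_pow_atTop_atTop_of_one_lt ha)
  have hlim : Tendsto (fun k : ℕ => (a ^ d - (a ^ k)⁻¹) / ((a - 1) * (c - (a ^ k)⁻¹))) atTop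
      (𝓝 (a ^ d / ((a - 1) * c))) := by
    have h := ((tendsto_const_nhds (x := a ^ d)).sub hinv).div
      (((tendsto_const_nhds (x := c)).sub hinv).const_mul (a - 1))
      (by rw [sub_zero]; exact mul_ne_zero (sub_ne_zero.2 ha.ne') hc)
    rwa [sub_zero, sub_zero] at h
  refine hlim.congr fun k => ?_
  have hak : a ^ k ≠ 0 := by positivity
  rw [geom_sum_eq ha.ne', ← mul_div_mul_right _ _ hak, div_div]
  congr 1
  · field_simp
    ring
  · field_simp

theorem base_N_limits_general (N n : ℕ) (hn : 1 ≤ n) (hnN : n ≤ N - 1) :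
    Filter.Tendsto (fun k : ℕ =>
        (((Finset.Icc 1 (n * N ^ k - 1)).filter (fun x => leadingDigit N x = n)).card : ℝ)
          / (n * N ^ k - 1))
      Filter.atTop (nhds (1 / (((N : ℝ) - 1) * n))) ∧
    Filter.Tendsto (fun k : ℕ =>
        (((Finset.Icc 1 ((n + 1) * N ^ k - 1)).filter (fun x => leadingDigit N x = n)).card : ℝ)
          / ((n + 1) * N ^ k - 1))
      Filter.atTop (nhds ((N : ℝ) / (((N : ℝ) - 1) * (n + 1)))) := by
  have hnN' : n < N := by omega
  have hN1 : (1 : ℝ) < N := by exact_mod_cast hn.trans_lt hnN'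
  constructor
  · have h := tendsto_geom_sum_div_mul_pow_sub_one hN1 (c := n) (by positivity) 0
    simp only [add_zero, pow_zero] at h
    refine h.congr fun k => ?_
    rw [card_filter_leadingDigit_eq_Icc_mul_pow hn hnN']
    push_cast
    rfl
  · have h := tendsto_geom_sum_div_mul_pow_sub_one hN1 (c := n + 1) (by positivity) 1
    simp only [pow_one] at h
    refine h.congr fun k => ?_
    rw [card_filter_leadingDigit_eq_Icc_succ_mul_pow hn hnN']
    push_cast
    rfl

theorem base_N_limits (N n : ℕ) (hN : 2 ≤ N) (hn : 1 ≤ n) (hnN : n ≤ N - 1) :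
    Filter.Tendsto (fun k : ℕ =>
        (((Finset.Icc 1 (n * N ^ k - 1)).filter (fun x => leadingDigit N x = n)).card : ℝ)
          / (n * N ^ k - 1))
      Filter.atTop (nhds (1 / (((N : ℝ) - 1) * n))) ∧
    Filter.Tendsto (fun k : ℕ =>
        (((Finset.Icc 1 ((n + 1) * N ^ k - 1)).filter (fun x => leadingDigit N x = n)).card : ℝ)
          / ((n + 1) * N ^ k - 1))
      Filter.atTop (nhds ((N : ℝ) / (((N : ℝ) - 1) * (n + 1)))) :=
  base_N_limits_general N n hn hnN
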